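/- arXiv:2005.07546 — 11 statements merged into one kernel-verified Lean document; each statement's English description precedes it below -/
import Mathlib

section
/- Let X be a topological space, G a group of homeomorphisms of X, and x, y ∈ X. Suppose f : X → X is a homeomorphism such that f(x) = y and for every open neighbourhood U of x there exists g_U ∈ G with g_U(z) = f(z) for all z ∈ X \ U. Then f conjugates the neighbourhood stabiliser of x onto the neighbourhood stabiliser of y, i.e. f · St⁰_G(x) · f⁻¹ = St⁰_G(y). -/
open Filter Topology Set

variable {X : Type*} [TopologicalSpace X]

/-- The group structure on self-homeomorphisms of `X`, with `(f * g) x = f (g x)`. -/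
instance Homeomorph.instGroupSelf : Group (X ≃ₜ X) where
  mul f g := g.trans f
  one := Homeomorph.refl X
  inv := Homeomorph.symm
  mul_assoc _ _ _ := rfl
  one_mul _ := Homeomorph.ext fun _ => rfl
  mul_one _ := Homeomorph.ext fun _ => rfl
  inv_mul_cancel f := Homeomorph.ext fun x => f.symm_apply_apply x

/-- The orbit of `x` under a group `G` of homeomorphisms of `X`. -/
def orbitSet (G : Subgroup (X ≃ₜ X)) (x : X) : Set X := {z | ∃ g ∈ G, g x = z}

/-- The action of `G` on `X` is minimal: every orbit is dense. -/
def IsMinimalAction (G : Subgroup (X ≃ₜ X)) : Prop := ∀ x : X, Dense (orbitSet G x)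

/-- A set `S` of homeomorphisms acts minimally on `U`: for every `y ∈ U`, the intersection of
the `S`-orbit of `y` with `U` is dense in `U`. -/
def MinimalOn (S : Set (X ≃ₜ X)) (U : Set X) : Prop :=
  ∀ y ∈ U, U ⊆ closure ({z | ∃ g ∈ S, g y = z} ∩ U)

/-- A set `S` of homeomorphisms acts locally minimally on `U`: every point of `U` has an open
neighbourhood `W ⊆ U` in which the intersection of every `S`-orbit with `W` is dense. -/
def LocallyMinimalOn (S : Set (X ≃ₜ X)) (U : Set X) : Prop :=
  ∀ x ∈ U, ∃ W ⊆ U, IsOpen W ∧ x ∈ W ∧ MinimalOn S W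

/-- The rigid stabiliser of `U` in `G`: elements of `G` fixing `X \ U` pointwise. -/
def rist (G : Subgroup (X ≃ₜ X)) (U : Set X) : Set (X ≃ₜ X) :=
  {g | g ∈ G ∧ ∀ z ∉ U, g z = z}

/-- The neighbourhood stabiliser of `x` in `G`, as a set: elements of `G` fixing pointwise
some open neighbourhood of `x`. -/
def nbhdStab (G : Subgroup (X ≃ₜ X)) (x : X) : Set (X ≃ₜ X) :=
  {g | g ∈ G ∧ ∃ U : Set X, IsOpen U ∧ x ∈ U ∧ ∀ z ∈ U, g z = z}

/-- The stabiliser of `x` in `G`, as a subgroup of the homeomorphism group. -/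
def stabSub (G : Subgroup (X ≃ₜ X)) (x : X) : Subgroup (X ≃ₜ X) where
  carrier := {g | g ∈ G ∧ g x = x}
  one_mem' := ⟨G.one_mem, rfl⟩
  mul_mem' := by
    rintro a b ⟨haG, ha⟩ ⟨hbG, hb⟩
    exact ⟨G.mul_mem haG hbG, by show a (b x) = x; rw [hb, ha]⟩
  inv_mem' := by
    rintro a ⟨haG, ha⟩
    refine ⟨G.inv_mem haG, ?_⟩
    show a.symm x = x
    conv_lhs => rw [← ha]
    exact a.symm_apply_apply x

/-- The neighbourhood stabiliser of `x` in `G`, as a subgroup of the homeomorphism group. -/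
def nbhdStabSub (G : Subgroup (X ≃ₜ X)) (x : X) : Subgroup (X ≃ₜ X) where
  carrier := nbhdStab G x
  one_mem' := ⟨G.one_mem, Set.univ, isOpen_univ, trivial, fun _ _ => rfl⟩
  mul_mem' := by
    rintro a b ⟨haG, U, hU, hxU, ha⟩ ⟨hbG, V, hV, hxV, hb⟩
    refine ⟨G.mul_mem haG hbG, U ∩ V, hU.inter hV, ⟨hxU, hxV⟩, fun z hz => ?_⟩
    show a (b z) = z
    rw [hb z hz.2, ha z hz.1]
  inv_mem' := by
    rintro a ⟨haG, U, hU, hxU, ha⟩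
    refine ⟨G.inv_mem haG, U, hU, hxU, fun z hz => ?_⟩
    show a.symm z = z
    conv_lhs => rw [← ha z hz]
    exact a.symm_apply_apply z

lemma conj_eq_of_agree_outside (f g : X ≃ₜ X) (U : Set X)
    (hg : ∀ z ∉ U, g z = f z) (h : X ≃ₜ X) (hh : ∀ z ∈ U, h z = z) :
    f * h * f⁻¹ = g * h * g⁻¹ := by
  have hginv : ∀ w, f.symm w ∉ U → g.symm w = f.symm w := by
    intro w hw
    have : g (f.symm w) = w := by rw [hg _ hw, f.apply_symm_apply]
    calc g.symm w = g.symm (g (f.symm w)) := by rw [this]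
      _ = f.symm w := g.symm_apply_apply _
  have hmemiff : ∀ w, f.symm w ∈ U ↔ g.symm w ∈ U := by
    intro w
    constructor
    · intro hfw
      by_contra hgw
      have : f (g.symm w) = w := by rw [← hg _ hgw, g.apply_symm_apply]
      have : f.symm w = g.symm w := by
        calc f.symm w = f.symm (f (g.symm w)) := by rw [this]
          _ = g.symm w := f.symm_apply_apply _
      exact hgw (this ▸ hfw)
    · intro hgw
      by_contra hfw
      rw [hginv w hfw] at hgw
      exact hfw hgw
  have hhout : ∀ z ∉ U, h z ∉ U := by
    intro z hz hhz
    have := hh _ hhz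
    have : h z = z := h.injective this
    exact hz (this ▸ hhz)
  apply Homeomorph.ext
  intro w
  show f (h (f.symm w)) = g (h (g.symm w))
  by_cases hw : f.symm w ∈ U
  · rw [hh _ hw, f.apply_symm_apply, hh _ ((hmemiff w).mp hw), g.apply_symm_apply]
  · rw [hginv w hw, ← hg _ (hhout _ hw)]

theorem conj_nbhdStab_of_agrees_outside (G : Subgroup (X ≃ₜ X)) (x y : X)
    (f : X ≃ₜ X) (hfx : f x = y)
    (hf : ∀ U : Set X, IsOpen U → x ∈ U → ∃ g ∈ G, ∀ z ∉ U, g z = f z) :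
    (fun g => f * g * f⁻¹) '' nbhdStab G x = nbhdStab G y := by
  ext k
  constructor
  · rintro ⟨h, ⟨hhG, U, hU, hxU, hhfix⟩, rfl⟩
    obtain ⟨g, hgG, hg⟩ := hf U hU hxU
    have heq : f * h * f⁻¹ = g * h * g⁻¹ := conj_eq_of_agree_outside f g U hg h hhfix
    have hmemG : f * h * f⁻¹ ∈ G := by
      rw [heq]; exact G.mul_mem (G.mul_mem hgG hhG) (G.inv_mem hgG)
    refine ⟨hmemG,
      f '' U, f.isOpen_image.mpr hU, ⟨x, hxU, hfx⟩, ?_⟩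
    rintro z ⟨u, huU, rfl⟩
    show f (h (f.symm (f u))) = f u
    rw [f.symm_apply_apply, hhfix _ huU]
  · rintro ⟨hkG, V, hV, hyV, hkfix⟩
    obtain ⟨g, hgG, hg⟩ := hf (f ⁻¹' V) (hV.preimage f.continuous)
      (by simpa [Set.mem_preimage, hfx] using hyV)
    have hg' : ∀ z ∉ V, (g⁻¹ : X ≃ₜ X) z = (f⁻¹ : X ≃ₜ X) z := by
      intro z hz
      have hfz : f.symm z ∉ f ⁻¹' V := by
        simp only [Set.mem_preimage, f.apply_symm_apply]; exact hz
      have : g (f.symm z) = z := by rw [hg _ hfz, f.apply_symm_apply]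
      show g.symm z = f.symm z
      calc g.symm z = g.symm (g (f.symm z)) := by rw [this]
        _ = f.symm z := g.symm_apply_apply _
    have heq : f⁻¹ * k * (f⁻¹)⁻¹ = g⁻¹ * k * (g⁻¹)⁻¹ :=
      conj_eq_of_agree_outside f⁻¹ g⁻¹ V hg' k hkfix
    rw [inv_inv, inv_inv] at heq
    have hmemG : f⁻¹ * k * f ∈ G := by
      rw [heq]; exact G.mul_mem (G.mul_mem (G.inv_mem hgG) hkG) hgG
    refine ⟨f⁻¹ * k * f, ⟨hmemG,
      f ⁻¹' V, hV.preimage f.continuous, by simpa [Set.mem_preimage, hfx] using hyV, ?_⟩, ?_⟩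
    · intro z hz
      show f.symm (k (f z)) = z
      rw [hkfix _ hz, f.symm_apply_apply]
    · show f * (f⁻¹ * k * f) * f⁻¹ = k
      group
end

section
/- Let X be a first-countable Hausdorff space, G a group of homeomorphisms of X, and x, y ∈ X. Suppose there exist decreasing (under inclusion) neighbourhood bases {U_i} of x and {V_i} of y, and a sequence {g_i} in G such that g_i(U_i) = V_i for all i, and g_{i+1}(z) = g_i(z) for all z ∈ X \ U_i. Then the sequence {g_i} converges pointwise to a map f : X → X with f(x) = y. -/
open Filter Topology Set

variable {X : Type*} [TopologicalSpace X]

theorem pointwise_limit_exists [FirstCountableTopology X] [T2Space X]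
    (G : Subgroup (X ≃ₜ X)) (x y : X) (U V : ℕ → Set X) (g : ℕ → X ≃ₜ X)
    (hUopen : ∀ i, IsOpen (U i)) (hxU : ∀ i, x ∈ U i)
    (hUdec : ∀ i, U (i + 1) ⊆ U i) (hUbasis : ∀ S ∈ 𝓝 x, ∃ i, U i ⊆ S)
    (hVopen : ∀ i, IsOpen (V i)) (hyV : ∀ i, y ∈ V i)
    (hVdec : ∀ i, V (i + 1) ⊆ V i) (hVbasis : ∀ S ∈ 𝓝 y, ∃ i, V i ⊆ S)
    (hgG : ∀ i, g i ∈ G) (hgUV : ∀ i, ⇑(g i) '' U i = V i)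
    (hagree : ∀ i, ∀ z ∉ U i, g (i + 1) z = g i z) :
    ∃ f : X → X, f x = y ∧ ∀ z : X, Tendsto (fun i => g i z) atTop (𝓝 (f z)) := by
  classical
  have hUanti : ∀ i j, i ≤ j → U j ⊆ U i := fun i j h =>
    antitone_nat_of_succ_le (fun n => hUdec n) h
  have hVanti : ∀ i j, i ≤ j → V j ⊆ V i := fun i j h =>
    antitone_nat_of_succ_le (fun n => hVdec n) h
  have hconst : ∀ N z, z ∉ U N → ∀ i, N ≤ i → g i z = g N z := by
    intro N z hz i hi
    induction i with
    | zero => rw [Nat.le_zero.mp hi]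
    | succ n ih =>
      rcases Nat.lt_or_ge N (n+1) with h | h
      · have hn : N ≤ n := Nat.lt_succ_iff.mp h
        rw [hagree n z (fun hzn => hz (hUanti N n hn hzn)), ih hn]
      · have : N = n + 1 := le_antisymm hi h
        rw [this]
  refine ⟨fun z => if h : ∃ i, z ∉ U i then g h.choose z else y, ?_, ?_⟩
  · exact dif_neg (by push_neg; exact hxU)
  · intro z
    by_cases h : ∃ i, z ∉ U i
    · simp only [dif_pos h]
      set N := h.choose with hN
      have hzN : z ∉ U N := h.choose_spec
      have : ∀ i, N ≤ i → g i z = g N z := hconst N z hzN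
      apply Tendsto.congr' _ tendsto_const_nhds
      filter_upwards [eventually_ge_atTop N] with i hi
      exact (this i hi).symm
    · simp only [dif_neg h]
      push_neg at h
      rw [tendsto_def]
      intro S hS
      obtain ⟨i0, hi0⟩ := hVbasis S hS
      filter_upwards [eventually_ge_atTop i0] with i hi
      have : g i z ∈ V i := by
        rw [← hgUV i]; exact ⟨z, h i, rfl⟩
      exact hi0 (hVanti i0 i hi this)
end

section
/- Let X be a first-countable Hausdorff space, G a group of homeomorphisms of X, and x, y ∈ X. Suppose there exist decreasing neighbourhood bases {U_i} of x and {V_i} of y, and a sequence {g_i} in G such that g_i(U_i) = V_i and g_{i+1}(z) = g_i(z) for all z ∈ X \ U_i, for all i. Then the pointwise limit f of {g_i} is a bijection of X whose inverse is the pointwise limit of {g_i⁻¹}. -/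
open Filter Topology Set

variable {X : Type*} [TopologicalSpace X]

theorem pointwise_limit_bijective [FirstCountableTopology X] [T2Space X]
    (G : Subgroup (X ≃ₜ X)) (x y : X) (U V : ℕ → Set X) (g : ℕ → X ≃ₜ X)
    (hUopen : ∀ i, IsOpen (U i)) (hxU : ∀ i, x ∈ U i)
    (hUdec : ∀ i, U (i + 1) ⊆ U i) (hUbasis : ∀ S ∈ 𝓝 x, ∃ i, U i ⊆ S)
    (hVopen : ∀ i, IsOpen (V i)) (hyV : ∀ i, y ∈ V i)
    (hVdec : ∀ i, V (i + 1) ⊆ V i) (hVbasis : ∀ S ∈ 𝓝 y, ∃ i, V i ⊆ S)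
    (hgG : ∀ i, g i ∈ G) (hgUV : ∀ i, ⇑(g i) '' U i = V i)
    (hagree : ∀ i, ∀ z ∉ U i, g (i + 1) z = g i z) :
    ∃ f h : X → X,
      (∀ z : X, Tendsto (fun i => g i z) atTop (𝓝 (f z))) ∧
      (∀ z : X, Tendsto (fun i => (g i)⁻¹ z) atTop (𝓝 (h z))) ∧
      Function.LeftInverse h f ∧ Function.RightInverse h f := by
  classical
  have hinv_symm : ∀ a : X ≃ₜ X, (a⁻¹ : X ≃ₜ X) = a.symm := fun _ => rfl
  have hUanti : Antitone U := antitone_nat_of_succ_le hUdec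
  have hVanti : Antitone V := antitone_nat_of_succ_le hVdec
  have hconst : ∀ N z, z ∉ U N → ∀ i, N ≤ i → g i z = g N z := by
    intro N z hz i hi
    induction i, hi using Nat.le_induction with
    | base => rfl
    | succ i hi ih => rw [hagree i z (fun h => hz (hUanti hi h)), ih]
  have hinvconst : ∀ N z, z ∉ V N → ∀ i, N ≤ i → (g i)⁻¹ z = (g N)⁻¹ z := by
    intro N z hz i hi
    induction i, hi using Nat.le_induction with
    | base => rfl
    | succ i hi ih =>
      have hz' : z ∉ V i := fun h => hz (hVanti hi h)
      have hw : (g i)⁻¹ z ∉ U i := by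
        intro h
        apply hz'
        rw [← hgUV i]
        exact ⟨(g i)⁻¹ z, h, by rw [hinv_symm]; exact (g i).apply_symm_apply z⟩
      have hkey : g (i + 1) ((g i)⁻¹ z) = z := by
        rw [hagree i _ hw, hinv_symm]; exact (g i).apply_symm_apply z
      calc (g (i + 1))⁻¹ z = (g (i + 1))⁻¹ (g (i + 1) ((g i)⁻¹ z)) := by rw [hkey]
        _ = (g i)⁻¹ z := by rw [hinv_symm]; exact (g (i + 1)).symm_apply_apply _
        _ = (g N)⁻¹ z := ih
  have hgxV : ∀ i, g i x ∈ V i := fun i => (hgUV i) ▸ ⟨x, hxU i, rfl⟩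
  have hgiyU : ∀ i, (g i)⁻¹ y ∈ U i := by
    intro i
    have : y ∈ (g i) '' U i := (hgUV i) ▸ hyV i
    obtain ⟨w, hw, hwy⟩ := this
    have : (g i)⁻¹ y = w := by rw [← hwy, hinv_symm]; exact (g i).symm_apply_apply w
    rw [this]; exact hw
  have htend_y : ∀ a : ℕ → X, (∀ i, a i ∈ V i) → Tendsto a atTop (𝓝 y) := by
    intro a ha
    rw [tendsto_atTop']
    intro s hs
    obtain ⟨j, hj⟩ := hVbasis s hs
    exact ⟨j, fun i hi => hj (hVanti hi (ha i))⟩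
  have htend_x : ∀ a : ℕ → X, (∀ i, a i ∈ U i) → Tendsto a atTop (𝓝 x) := by
    intro a ha
    rw [tendsto_atTop']
    intro s hs
    obtain ⟨j, hj⟩ := hUbasis s hs
    exact ⟨j, fun i hi => hj (hUanti hi (ha i))⟩
  have hescU : ∀ z, z ≠ x → ∃ N, z ∉ U N := by
    intro z hz
    obtain ⟨N, hN⟩ := hUbasis {z}ᶜ (compl_singleton_mem_nhds (fun h => hz h.symm))
    exact ⟨N, fun h => hN h rfl⟩
  have hescV : ∀ z, z ≠ y → ∃ N, z ∉ V N := by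
    intro z hz
    obtain ⟨N, hN⟩ := hVbasis {z}ᶜ (compl_singleton_mem_nhds (fun h => hz h.symm))
    exact ⟨N, fun h => hN h rfl⟩
  have hlimf : ∀ z, ∃ w, Tendsto (fun i => g i z) atTop (𝓝 w) := by
    intro z
    by_cases hz : z = x
    · subst hz; exact ⟨y, htend_y _ hgxV⟩
    · obtain ⟨N, hN⟩ := hescU z hz
      exact ⟨g N z, Tendsto.congr'
        (eventually_atTop.2 ⟨N, fun i hi => (hconst N z hN i hi).symm⟩) tendsto_const_nhds⟩
  have hlimh : ∀ z, ∃ w, Tendsto (fun i => (g i)⁻¹ z) atTop (𝓝 w) := by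
    intro z
    by_cases hz : z = y
    · subst hz; exact ⟨x, htend_x _ hgiyU⟩
    · obtain ⟨N, hN⟩ := hescV z hz
      exact ⟨(g N)⁻¹ z, Tendsto.congr'
        (eventually_atTop.2 ⟨N, fun i hi => (hinvconst N z hN i hi).symm⟩) tendsto_const_nhds⟩
  set f : X → X := fun z => (hlimf z).choose with hf
  set h : X → X := fun z => (hlimh z).choose with hh
  have hft : ∀ z, Tendsto (fun i => g i z) atTop (𝓝 (f z)) := fun z => (hlimf z).choose_spec
  have hht : ∀ z, Tendsto (fun i => (g i)⁻¹ z) atTop (𝓝 (h z)) := fun z => (hlimh z).choose_spec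
  have hfx : f x = y := tendsto_nhds_unique (hft x) (htend_y _ hgxV)
  have hhy : h y = x := tendsto_nhds_unique (hht y) (htend_x _ hgiyU)
  have hfval : ∀ z N, z ∉ U N → f z = g N z := by
    intro z N hN
    refine tendsto_nhds_unique (hft z) (Tendsto.congr'
      (eventually_atTop.2 ⟨N, fun i hi => (hconst N z hN i hi).symm⟩) tendsto_const_nhds)
  have hhval : ∀ z N, z ∉ V N → h z = (g N)⁻¹ z := by
    intro z N hN
    refine tendsto_nhds_unique (hht z) (Tendsto.congr'
      (eventually_atTop.2 ⟨N, fun i hi => (hinvconst N z hN i hi).symm⟩) tendsto_const_nhds)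
  refine ⟨f, h, hft, hht, ?_, ?_⟩
  · -- LeftInverse h f : ∀ z, h (f z) = z
    intro z
    by_cases hz : z = x
    · subst hz; rw [hfx, hhy]
    · obtain ⟨N, hN⟩ := hescU z hz
      have hfz : f z = g N z := hfval z N hN
      have hfzy : f z ≠ y := by
        intro hfzy
        apply hN
        have : z = (g N)⁻¹ y := by
          rw [hinv_symm, ← hfzy, hfz]; exact ((g N).symm_apply_apply z).symm
        rw [this]; exact hgiyU N
      obtain ⟨M, hM⟩ := hescV (f z) hfzy
      have hM' : f z ∉ V (max M N) := fun hm => hM (hVanti (le_max_left M N) hm)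
      rw [hhval (f z) (max M N) hM']
      have : f z = g (max M N) z := by
        rw [hfz]; exact (hconst N z hN (max M N) (le_max_right M N)).symm
      rw [this, hinv_symm]
      exact (g (max M N)).symm_apply_apply z
  · -- RightInverse h f : ∀ z, f (h z) = z
    intro z
    by_cases hz : z = y
    · subst hz; rw [hhy, hfx]
    · obtain ⟨N, hN⟩ := hescV z hz
      have hhz : h z = (g N)⁻¹ z := hhval z N hN
      have hhzx : h z ≠ x := by
        intro hhzx
        apply hN
        have : z = g N x := by
          rw [← hhzx, hhz, hinv_symm]; exact ((g N).apply_symm_apply z).symm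
        rw [this, ← hgUV N]; exact ⟨x, hxU N, rfl⟩
      obtain ⟨M, hM⟩ := hescU (h z) hhzx
      have hM' : h z ∉ U (max M N) := fun hm => hM (hUanti (le_max_left M N) hm)
      rw [hfval (h z) (max M N) hM']
      have : h z = (g (max M N))⁻¹ z := by
        rw [hhz]; exact (hinvconst N z hN (max M N) (le_max_right M N)).symm
      rw [this, hinv_symm]
      exact (g (max M N)).apply_symm_apply z
end

section
/- Let X be a first-countable Hausdorff space, G a group of homeomorphisms of X, and x, y ∈ X. Suppose there exist decreasing neighbourhood bases {U_i} of x and {V_i} of y, and a sequence {g_i} in G with g_i(U_i) = V_i and g_{i+1} agreeing with g_i outside U_i for all i. Then the pointwise limit f of {g_i} is a homeomorphism of X with f(x) = y, and f · St⁰_G(x) · f⁻¹ = St⁰_G(y). -/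
open Filter Topology Set

variable {X : Type*} [TopologicalSpace X]

private lemma limit_aux [T2Space X]
    (x y : X) (U V : ℕ → Set X) (g : ℕ → X ≃ₜ X)
    (hUopen : ∀ i, IsOpen (U i)) (hxU : ∀ i, x ∈ U i)
    (hUdec : ∀ i, U (i + 1) ⊆ U i) (hUbasis : ∀ S ∈ 𝓝 x, ∃ i, U i ⊆ S)
    (hyV : ∀ i, y ∈ V i) (hVdec : ∀ i, V (i + 1) ⊆ V i)
    (hVbasis : ∀ S ∈ 𝓝 y, ∃ i, V i ⊆ S)
    (hmem : ∀ i z, z ∈ U i ↔ g i z ∈ V i)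
    (hagree : ∀ i, ∀ z ∉ U i, g (i + 1) z = g i z) :
    ∃ F : X → X, F x = y ∧ (∀ i z, z ∉ U i → F z = g i z) ∧
      (∀ i z, z ∈ U i ↔ F z ∈ V i) ∧ Continuous F ∧
      ∀ z, Tendsto (fun i => g i z) atTop (𝓝 (F z)) := by
  classical
  have hUmono : ∀ i j, i ≤ j → U j ⊆ U i := fun i j hij =>
    antitone_nat_of_succ_le (fun n => hUdec n) hij
  have hVmono : ∀ i j, i ≤ j → V j ⊆ V i := fun i j hij =>
    antitone_nat_of_succ_le (fun n => hVdec n) hij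
  have hagree' : ∀ i j, i ≤ j → ∀ z ∉ U i, g j z = g i z := by
    intro i j hij
    induction j, hij using Nat.le_induction with
    | base => intro z _; rfl
    | succ j hij ih =>
      intro z hz
      rw [hagree j z (fun hc => hz (hUmono i j hij hc)), ih z hz]
  have hstep : ∀ j z, z ∈ U j → g (j + 1) z ∈ V j := by
    intro j z hz
    by_contra hc
    set u := (g j).symm (g (j + 1) z) with hu
    have hgu : g j u = g (j + 1) z := (g j).apply_symm_apply _
    have huU : u ∉ U j := fun h => hc (hgu ▸ (hmem j u).mp h)
    have he : g (j + 1) u = g (j + 1) z := by rw [hagree j u huU, hgu]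
    have : u = z := (g (j + 1)).injective he
    exact huU (this ▸ hz)
  have hmem' : ∀ i j, i ≤ j → ∀ z, (z ∈ U i ↔ g j z ∈ V i) := by
    intro i j hij
    induction j, hij using Nat.le_induction with
    | base => exact hmem i
    | succ j hij ih =>
      intro z
      by_cases hz : z ∈ U j
      · exact ⟨fun _ => hVmono i j hij (hstep j z hz), fun _ => hUmono i j hij hz⟩
      · rw [hagree j z hz]; exact ih z
  set F : X → X := fun z => if h : ∃ i, z ∉ U i then g (Nat.find h) z else y with hF
  have hA : ∀ i z, z ∉ U i → F z = g i z := by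
    intro i z hz
    have hex : ∃ k, z ∉ U k := ⟨i, hz⟩
    have hk := Nat.find_spec hex
    have e1 : g (max i (Nat.find hex)) z = g (Nat.find hex) z :=
      hagree' _ _ (le_max_right _ _) z hk
    have e2 : g (max i (Nat.find hex)) z = g i z := hagree' _ _ (le_max_left _ _) z hz
    simp only [hF, dif_pos hex]
    rw [← e1, e2]
  have hFconst : ∀ z, (∀ i, z ∈ U i) → F z = y := by
    intro z hz
    have hne : ¬∃ i, z ∉ U i := by push_neg; exact hz
    simp only [hF, dif_neg hne]
  have hB : ∀ i z, z ∈ U i ↔ F z ∈ V i := by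
    intro i z
    by_cases hz : ∃ k, z ∉ U k
    · obtain ⟨k, hk⟩ := hz
      have hzj : z ∉ U (max i k) := fun hc => hk (hUmono k _ (le_max_right _ _) hc)
      rw [hA _ z hzj]
      exact hmem' i (max i k) (le_max_left _ _) z
    · push_neg at hz
      rw [hFconst z hz]
      simp [hz i, hyV i]
  have hT : ∀ z, Tendsto (fun i => g i z) atTop (𝓝 (F z)) := by
    intro z
    by_cases hz : ∃ k, z ∉ U k
    · obtain ⟨k, hk⟩ := hz
      have hev : ∀ j, k ≤ j → g j z = F z := by
        intro j hj
        rw [hA k z hk, hagree' k j hj z hk]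
      exact tendsto_const_nhds.congr'
        (eventually_atTop.mpr ⟨k, fun j hj => (hev j hj).symm⟩)
    · push_neg at hz
      rw [hFconst z hz, tendsto_def]
      intro S hS
      obtain ⟨i, hi⟩ := hVbasis S hS
      exact mem_atTop_sets.mpr ⟨i, fun j hj => hi (hVmono i j hj ((hmem j z).mp (hz j)))⟩
  have hC : Continuous F := by
    rw [continuous_iff_continuousAt]
    intro z
    rw [ContinuousAt, tendsto_def]
    intro S hS
    by_cases hz : ∃ k, z ∉ U k
    · obtain ⟨k, hk⟩ := hz
      have hFz : F z ∉ V k := fun hc => hk ((hB k z).mpr hc)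
      have hne : F z ≠ y := fun hc => hFz (hc ▸ hyV k)
      obtain ⟨A', B', hAo, hBo, hwA, hyB, hAB⟩ := t2_separation hne
      obtain ⟨j₀, hj₀⟩ := hVbasis B' (hBo.mem_nhds hyB)
      set j := max j₀ k with hjdef
      obtain ⟨O, hOS, hOopen, hwO⟩ := mem_nhds_iff.mp hS
      have hgjz : g j z = F z := by
        rw [hagree' k j (le_max_right _ _) z hk, ← hA k z hk]
      have hWopen : IsOpen ((g j) ⁻¹' (O ∩ A')) :=
        (hOopen.inter hAo).preimage (g j).continuous
      have hzW : z ∈ (g j) ⁻¹' (O ∩ A') := by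
        simp only [Set.mem_preimage, hgjz]; exact ⟨hwO, hwA⟩
      refine mem_of_superset (hWopen.mem_nhds hzW) ?_
      intro u hu
      have huU : u ∉ U j := by
        intro hc
        have h1 : g j u ∈ V j₀ := hVmono j₀ j (le_max_left _ _) ((hmem j u).mp hc)
        exact (hAB.le_bot ⟨hu.2, hj₀ h1⟩ : False)
      show F u ∈ S
      exact hOS (by rw [hA j u huU]; exact hu.1)
    · push_neg at hz
      have hFz : F z = y := hFconst z hz
      rw [hFz] at hS
      obtain ⟨i, hi⟩ := hVbasis S hS
      exact mem_of_superset ((hUopen i).mem_nhds (hz i))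
        (fun u hu => hi ((hB i u).mp hu))
  exact ⟨F, hFconst x hxU, hA, hB, hC, hT⟩

private lemma conj_mem_aux (G : Subgroup (X ≃ₜ X)) (x y : X) (U V : ℕ → Set X)
    (g : ℕ → X ≃ₜ X) (f : X ≃ₜ X)
    (hVopen : ∀ i, IsOpen (V i)) (hyV : ∀ i, y ∈ V i)
    (hUbasis : ∀ S ∈ 𝓝 x, ∃ i, U i ⊆ S)
    (hgG : ∀ i, g i ∈ G)
    (hmem : ∀ i z, z ∈ U i ↔ g i z ∈ V i)
    (hA : ∀ i u, u ∉ U i → f u = g i u)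
    (hA' : ∀ i w, w ∉ V i → f.symm w = (g i).symm w)
    (hB' : ∀ i w, w ∈ V i ↔ f.symm w ∈ U i)
    (h : X ≃ₜ X) (hh : h ∈ nbhdStab G x) :
    f * h * f⁻¹ ∈ nbhdStab G y := by
  obtain ⟨hG, Uo, hUoopen, hxUo, hfix⟩ := hh
  obtain ⟨i, hUi⟩ := hUbasis Uo (hUoopen.mem_nhds hxUo)
  have hsymmfix : ∀ u ∈ Uo, h.symm u = u := by
    intro u hu
    conv_lhs => rw [← hfix u hu]
    exact h.symm_apply_apply u
  have hfixV : ∀ w ∈ V i, (g i * h * (g i)⁻¹) w = w := by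
    intro w hw
    show g i (h ((g i).symm w)) = w
    have h2 : (g i).symm w ∈ U i := by
      rw [hmem i ((g i).symm w), (g i).apply_symm_apply]; exact hw
    rw [hfix _ (hUi h2)]
    exact (g i).apply_symm_apply w
  have key : ∀ w, (f * h * f⁻¹) w = (g i * h * (g i)⁻¹) w := by
    intro w
    show f (h (f.symm w)) = g i (h ((g i).symm w))
    by_cases hw : w ∈ V i
    · have h1 : f.symm w ∈ U i := (hB' i w).mp hw
      have h2 : (g i).symm w ∈ U i := by
        rw [hmem i ((g i).symm w), (g i).apply_symm_apply]; exact hw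
      rw [hfix _ (hUi h1), hfix _ (hUi h2), f.apply_symm_apply, (g i).apply_symm_apply]
    · rw [hA' i w hw]
      have hzU : (g i).symm w ∉ U i := by
        rw [hmem i ((g i).symm w), (g i).apply_symm_apply]; exact hw
      have hhz : h ((g i).symm w) ∉ U i := by
        intro hc
        have heq2 : (g i).symm w = h ((g i).symm w) := by
          conv_lhs => rw [← h.symm_apply_apply ((g i).symm w)]
          exact hsymmfix _ (hUi hc)
        exact hzU (heq2 ▸ hc)
      exact hA i _ hhz
  have heq : f * h * f⁻¹ = g i * h * (g i)⁻¹ := Homeomorph.ext key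
  rw [heq]
  exact ⟨G.mul_mem (G.mul_mem (hgG i) hG) (G.inv_mem (hgG i)),
    V i, hVopen i, hyV i, hfixV⟩

theorem pointwise_limit_homeomorph_conj [FirstCountableTopology X] [T2Space X]
    (G : Subgroup (X ≃ₜ X)) (x y : X) (U V : ℕ → Set X) (g : ℕ → X ≃ₜ X)
    (hUopen : ∀ i, IsOpen (U i)) (hxU : ∀ i, x ∈ U i)
    (hUdec : ∀ i, U (i + 1) ⊆ U i) (hUbasis : ∀ S ∈ 𝓝 x, ∃ i, U i ⊆ S)
    (hVopen : ∀ i, IsOpen (V i)) (hyV : ∀ i, y ∈ V i)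
    (hVdec : ∀ i, V (i + 1) ⊆ V i) (hVbasis : ∀ S ∈ 𝓝 y, ∃ i, V i ⊆ S)
    (hgG : ∀ i, g i ∈ G) (hgUV : ∀ i, ⇑(g i) '' U i = V i)
    (hagree : ∀ i, ∀ z ∉ U i, g (i + 1) z = g i z) :
    ∃ f : X ≃ₜ X, f x = y ∧
      (∀ z : X, Tendsto (fun i => g i z) atTop (𝓝 (f z))) ∧
      (fun h => f * h * f⁻¹) '' nbhdStab G x = nbhdStab G y := by
  classical
  have hmem : ∀ i z, z ∈ U i ↔ g i z ∈ V i := by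
    intro i z
    constructor
    · intro h; rw [← hgUV i]; exact Set.mem_image_of_mem _ h
    · intro h
      rw [← hgUV i] at h
      obtain ⟨u, hu, huz⟩ := h
      rwa [← (g i).injective huz]
  have hmem' : ∀ i w, w ∈ V i ↔ (g i).symm w ∈ U i := by
    intro i w
    rw [hmem i ((g i).symm w), (g i).apply_symm_apply]
  have hagree2 : ∀ i, ∀ w ∉ V i, (g (i + 1)).symm w = (g i).symm w := by
    intro i w hw
    have hu : (g i).symm w ∉ U i := fun hc => hw ((hmem' i w).mpr hc)
    have hgi : g (i + 1) ((g i).symm w) = w := by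
      rw [hagree i _ hu, (g i).apply_symm_apply]
    exact (g (i + 1)).symm_apply_eq.mpr hgi.symm
  obtain ⟨F, hFx, hAf, hBf, hCf, hTf⟩ :=
    limit_aux x y U V g hUopen hxU hUdec hUbasis hyV hVdec hVbasis hmem hagree
  obtain ⟨F', hF'y, hAf', hBf', hCf', hTf'⟩ :=
    limit_aux y x V U (fun i => (g i).symm) hVopen hyV hVdec hVbasis hxU hUdec hUbasis
      hmem' hagree2
  have hallU : ∀ z, (∀ i, z ∈ U i) → z = x := by
    intro z hz
    by_contra hne
    have hmemx : x ∈ ({z}ᶜ : Set X) := by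
      simp only [Set.mem_compl_iff, Set.mem_singleton_iff]
      exact fun h => hne h.symm
    obtain ⟨i, hi⟩ := hUbasis {z}ᶜ (isOpen_compl_singleton.mem_nhds hmemx)
    exact hi (hz i) rfl
  have hallV : ∀ w, (∀ i, w ∈ V i) → w = y := by
    intro w hw
    by_contra hne
    have hmemy : y ∈ ({w}ᶜ : Set X) := by
      simp only [Set.mem_compl_iff, Set.mem_singleton_iff]
      exact fun h => hne h.symm
    obtain ⟨i, hi⟩ := hVbasis {w}ᶜ (isOpen_compl_singleton.mem_nhds hmemy)
    exact hi (hw i) rfl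
  have hleft : ∀ z, F' (F z) = z := by
    intro z
    by_cases hz : ∃ i, z ∉ U i
    · obtain ⟨i, hi⟩ := hz
      have h1 : F z ∉ V i := fun hc => hi ((hBf i z).mpr hc)
      rw [hAf' i (F z) h1, hAf i z hi, (g i).symm_apply_apply]
    · push_neg at hz
      rw [hallU z hz, hFx, hF'y]
  have hright : ∀ w, F (F' w) = w := by
    intro w
    by_cases hw : ∃ i, w ∉ V i
    · obtain ⟨i, hi⟩ := hw
      have h1 : F' w ∉ U i := fun hc => hi ((hBf' i w).mpr hc)
      rw [hAf i (F' w) h1, hAf' i w hi]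
      exact (g i).apply_symm_apply w
    · push_neg at hw
      rw [hallV w hw, hF'y, hFx]
  let f : X ≃ₜ X :=
    { toEquiv := ⟨F, F', hleft, hright⟩
      continuous_toFun := hCf
      continuous_invFun := hCf' }
  have hfcoe : ⇑f = F := rfl
  have hfsymm : ⇑f.symm = F' := rfl
  have hinv : f⁻¹ = f.symm := rfl
  have hss : f.symm.symm = f := Homeomorph.symm_symm f
  refine ⟨f, hFx, hTf, ?_⟩
  apply subset_antisymm
  · rintro _ ⟨h, hh, rfl⟩
    exact conj_mem_aux G x y U V g f hVopen hyV hUbasis hgG hmem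
      (fun i u hu => hAf i u hu) (fun i w hw => hAf' i w hw)
      (fun i w => hBf' i w) h hh
  · intro k hk
    have hconj : f⁻¹ * k * (f⁻¹)⁻¹ ∈ nbhdStab G x := by
      refine conj_mem_aux G y x V U (fun i => (g i).symm) f⁻¹ hUopen hxU hVbasis
        (fun i => G.inv_mem (hgG i)) hmem'
        (fun i w hw => hAf' i w hw)
        (fun i u hu => by rw [hinv, hss]; exact hAf i u hu)
        (fun i u => by rw [hinv, hss]; exact hBf i u) k hk
    rw [inv_inv] at hconj
    exact ⟨f⁻¹ * k * f, hconj, by group⟩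
end

section
/- Under the hypotheses of the convergence lemma (decreasing neighbourhood bases {U_i} of x and {V_i} of y, g_i(U_i) = V_i, and g_{i+1} = g_i outside U_i), the pointwise limit f of {g_i} satisfies f(U_N) = V_N for every N, and f agrees with g_N on X \ U_N. -/
open Filter Topology Set

variable {X : Type*} [TopologicalSpace X]

theorem pointwise_limit_maps_basis [FirstCountableTopology X] [T2Space X]
    (G : Subgroup (X ≃ₜ X)) (x y : X) (U V : ℕ → Set X) (g : ℕ → X ≃ₜ X)
    (hUopen : ∀ i, IsOpen (U i)) (hxU : ∀ i, x ∈ U i)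
    (hUdec : ∀ i, U (i + 1) ⊆ U i) (hUbasis : ∀ S ∈ 𝓝 x, ∃ i, U i ⊆ S)
    (hVopen : ∀ i, IsOpen (V i)) (hyV : ∀ i, y ∈ V i)
    (hVdec : ∀ i, V (i + 1) ⊆ V i) (hVbasis : ∀ S ∈ 𝓝 y, ∃ i, V i ⊆ S)
    (hgG : ∀ i, g i ∈ G) (hgUV : ∀ i, ⇑(g i) '' U i = V i)
    (hagree : ∀ i, ∀ z ∉ U i, g (i + 1) z = g i z)
    (f : X → X) (hconv : ∀ z : X, Tendsto (fun i => g i z) atTop (𝓝 (f z))) :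
    ∀ N : ℕ, f '' U N = V N ∧ ∀ z ∉ U N, f z = g N z := by
  have hUmono : ∀ i j, i ≤ j → U j ⊆ U i := by
    intro i j h
    induction j, h using Nat.le_induction with
    | base => exact subset_rfl
    | succ j hj ih => exact (hUdec j).trans ih
  have hVmono : ∀ i j, i ≤ j → V j ⊆ V i := by
    intro i j h
    induction j, h using Nat.le_induction with
    | base => exact subset_rfl
    | succ j hj ih => exact (hVdec j).trans ih
  have hstab : ∀ i j, i ≤ j → ∀ z, z ∉ U i → g j z = g i z := by
    intro i j h
    induction j, h using Nat.le_induction with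
    | base => intro z _; rfl
    | succ j hj ih =>
      intro z hz
      rw [hagree j z (fun hzj => hz (hUmono i j hj hzj)), ih z hz]
  have hA : ∀ i, ∀ z ∈ U i, g (i + 1) z ∈ V i := by
    intro i z hz
    by_contra hw
    set z' := (g i).symm (g (i + 1) z) with hz'def
    have hgz' : g i z' = g (i + 1) z := (g i).apply_symm_apply _
    have hz'notin : z' ∉ U i := fun h => hw (hgUV i ▸ ⟨z', h, hgz'⟩)
    have heq : g (i + 1) z' = g (i + 1) z := by
      rw [hagree i z' hz'notin, hgz']
    exact hz'notin ((g (i + 1)).injective heq ▸ hz)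
  have hiff : ∀ N i, N ≤ i → ∀ z, g i z ∈ V N ↔ z ∈ U N := by
    intro N i h
    induction i, h using Nat.le_induction with
    | base =>
      intro z
      constructor
      · intro hz
        rw [← hgUV N] at hz
        obtain ⟨z', hz', he⟩ := hz
        exact (g N).injective he ▸ hz'
      · intro hz; exact hgUV N ▸ ⟨z, hz, rfl⟩
    | succ i hi ih =>
      intro z
      by_cases hz : z ∈ U i
      · constructor
        · intro _; exact hUmono N i hi hz
        · intro _; exact hVmono N i hi (hA i z hz)
      · rw [hagree i z hz]; exact ih z
  have hfstab : ∀ i, ∀ z, z ∉ U i → f z = g i z := by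
    intro i z hz
    have ht : Tendsto (fun j => g j z) atTop (𝓝 (g i z)) := by
      apply Tendsto.congr' _ tendsto_const_nhds
      filter_upwards [eventually_ge_atTop i] with j hj
      exact (hstab i j hj z hz).symm
    exact tendsto_nhds_unique (hconv z) ht
  have hgxV : ∀ i, g i x ∈ V i := fun i => hgUV i ▸ ⟨x, hxU i, rfl⟩
  have hfx : f x = y := by
    have ht : Tendsto (fun i => g i x) atTop (𝓝 y) := by
      rw [tendsto_atTop_nhds]
      intro S hyS hSopen
      obtain ⟨k, hk⟩ := hVbasis S (hSopen.mem_nhds hyS)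
      exact ⟨k, fun i hi => hk (hVmono k i hi (hgxV i))⟩
    exact tendsto_nhds_unique (hconv x) ht
  intro N
  refine ⟨Set.eq_of_subset_of_subset ?_ ?_, fun z hz => hfstab N z hz⟩
  · rintro w ⟨z, hz, rfl⟩
    by_cases hzx : z = x
    · subst hzx; rw [hfx]; exact hyV N
    · obtain ⟨k, hk⟩ := hUbasis ({z}ᶜ)
        (isOpen_compl_singleton.mem_nhds (by simpa using fun h => hzx h.symm))
      have hzi : z ∉ U (max N k) := fun h => hk (hUmono k _ (le_max_right N k) h) rfl
      rw [hfstab (max N k) z hzi]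
      exact (hiff N (max N k) (le_max_left N k) z).mpr hz
  · intro w hw
    by_cases hwy : w = y
    · exact ⟨x, hxU N, by rw [hfx, hwy]⟩
    · obtain ⟨k, hk⟩ := hVbasis ({w}ᶜ)
        (isOpen_compl_singleton.mem_nhds (by simpa using fun h => hwy h.symm))
      set i := max N k with hi
      have hwi : w ∉ V i := fun h => hk (hVmono k i (le_max_right N k) h) rfl
      set z := (g i).symm w with hzdef
      have hgz : g i z = w := (g i).apply_symm_apply _
      have hzUN : z ∈ U N := (hiff N i (le_max_left N k) z).mp (hgz ▸ hw)
      have hzUi : z ∉ U i := fun h => hwi (hgz ▸ (hiff i i le_rfl z).mpr h)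
      exact ⟨z, hzUN, by rw [hfstab i z hzUi, hgz]⟩
end

section
/- Let G be a group of homeomorphisms of a topological space X. The action of G on X is locally minimal if and only if X decomposes as a disjoint union of clopen G-invariant subsets W_i such that the action of G on each W_i is minimal. -/
open Filter Topology Set

variable {X : Type*} [TopologicalSpace X]

/-!
Under local minimality every orbit closure is open: a point `y` of `closure (orbitSet G x)` has a
neighbourhood `W` on which every orbit is dense, and `W` meets the orbit of `x`, so `W` lies in the
orbit closure. Openness makes "`y` lies in the orbit closure of `x`" symmetric, so the orbit
closures partition `X` into clopen invariant pieces on each of which `G` acts minimally. Conversely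
such a partition is an open cover by minimal pieces.
-/

lemma mem_orbitSet_self (G : Subgroup (X ≃ₜ X)) (x : X) : x ∈ orbitSet G x :=
  ⟨1, G.one_mem, rfl⟩

section Orbits

variable {G : Subgroup (X ≃ₜ X)}

lemma orbitSet_eq_of_mem {x y : X} (h : y ∈ orbitSet G x) : orbitSet G y = orbitSet G x := by
  obtain ⟨g, hg, rfl⟩ := h
  ext z
  constructor
  · rintro ⟨k, hk, rfl⟩
    exact ⟨k * g, G.mul_mem hk hg, rfl⟩
  · rintro ⟨k, hk, rfl⟩
    refine ⟨k * g⁻¹, G.mul_mem hk (G.inv_mem hg), ?_⟩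
    show k (g.symm (g x)) = k x
    rw [g.symm_apply_apply]

lemma image_orbitSet {g : X ≃ₜ X} (hg : g ∈ G) (x : X) :
    g '' orbitSet G x = orbitSet G x := by
  refine Subset.antisymm ?_ fun z hz => ?_
  · rintro _ ⟨_, ⟨k, hk, rfl⟩, rfl⟩
    exact ⟨g * k, G.mul_mem hg hk, rfl⟩
  · have hgz : g.symm z ∈ orbitSet G x := by
      rw [← orbitSet_eq_of_mem hz]
      exact ⟨g⁻¹, G.inv_mem hg, rfl⟩
    exact ⟨g.symm z, hgz, g.apply_symm_apply z⟩

lemma image_closure_orbitSet {g : X ≃ₜ X} (hg : g ∈ G) (x : X) :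
    g '' closure (orbitSet G x) = closure (orbitSet G x) := by
  rw [g.image_closure, image_orbitSet hg]

lemma closure_orbitSet_subset {x y : X} (h : y ∈ closure (orbitSet G x)) :
    closure (orbitSet G y) ⊆ closure (orbitSet G x) := by
  refine closure_minimal ?_ isClosed_closure
  rintro _ ⟨g, hg, rfl⟩
  rw [← image_closure_orbitSet hg x]
  exact mem_image_of_mem g h

end Orbits

lemma locallyMinimalOn_univ_of_sUnion_eq {S : Set (X ≃ₜ X)} {𝒲 : Set (Set X)}
    (h𝒲 : ∀ W ∈ 𝒲, IsOpen W ∧ MinimalOn S W) (hcover : ⋃₀ 𝒲 = univ) :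
    LocallyMinimalOn S univ := by
  intro x _
  obtain ⟨W, hW, hxW⟩ := mem_sUnion.mp (hcover ▸ mem_univ x)
  exact ⟨W, subset_univ W, (h𝒲 W hW).1, hxW, (h𝒲 W hW).2⟩

namespace LocallyMinimalOn

variable {G : Subgroup (X ≃ₜ X)}

lemma isOpen_closure_orbitSet (H : LocallyMinimalOn (G : Set (X ≃ₜ X)) univ) (x : X) :
    IsOpen (closure (orbitSet G x)) := by
  refine isOpen_iff_forall_mem_open.mpr fun y hy => ?_
  obtain ⟨W, -, hWopen, hyW, hmin⟩ := H y trivial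
  obtain ⟨z, hzW, hzx⟩ := mem_closure_iff.mp hy W hWopen hyW
  have hWsub : W ⊆ closure (orbitSet G x) := calc
    W ⊆ closure (orbitSet G z ∩ W) := hmin z hzW
    _ ⊆ closure (orbitSet G z) := closure_mono inter_subset_left
    _ = closure (orbitSet G x) := by rw [orbitSet_eq_of_mem hzx]
  exact ⟨W, hWsub, hWopen, hyW⟩

lemma mem_closure_orbitSet_symm (H : LocallyMinimalOn (G : Set (X ≃ₜ X)) univ) {x y : X}
    (h : y ∈ closure (orbitSet G x)) : x ∈ closure (orbitSet G y) := by
  obtain ⟨_, hgx, g, hg, rfl⟩ := mem_closure_iff.mp h _ (H.isOpen_closure_orbitSet y)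
    (subset_closure (mem_orbitSet_self G y))
  have : g.symm (g x) ∈ g.symm '' closure (orbitSet G y) := mem_image_of_mem _ hgx
  rwa [g.symm_apply_apply, ← show ⇑(g⁻¹ : X ≃ₜ X) = g.symm from rfl,
    image_closure_orbitSet (G.inv_mem hg)] at this

lemma closure_orbitSet_eq_of_mem (H : LocallyMinimalOn (G : Set (X ≃ₜ X)) univ) {x y : X}
    (h : y ∈ closure (orbitSet G x)) : closure (orbitSet G y) = closure (orbitSet G x) :=
  (closure_orbitSet_subset h).antisymm (closure_orbitSet_subset (H.mem_closure_orbitSet_symm h))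

lemma pairwiseDisjoint_range_closure_orbitSet (H : LocallyMinimalOn (G : Set (X ≃ₜ X)) univ) :
    (range fun x => closure (orbitSet G x)).PairwiseDisjoint id := by
  rintro _ ⟨x, rfl⟩ _ ⟨y, rfl⟩ hne
  exact disjoint_left.mpr fun p hpx hpy =>
    hne ((H.closure_orbitSet_eq_of_mem hpx).symm.trans (H.closure_orbitSet_eq_of_mem hpy))

lemma minimalOn_closure_orbitSet (H : LocallyMinimalOn (G : Set (X ≃ₜ X)) univ) (x : X) :
    MinimalOn (G : Set (X ≃ₜ X)) (closure (orbitSet G x)) := by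
  intro y hy
  show closure (orbitSet G x) ⊆ closure (orbitSet G y ∩ closure (orbitSet G x))
  rw [inter_eq_self_of_subset_left (subset_closure.trans (closure_orbitSet_subset hy)),
    H.closure_orbitSet_eq_of_mem hy]

end LocallyMinimalOn

theorem locallyMinimal_iff_clopen_decomposition (G : Subgroup (X ≃ₜ X)) :
    LocallyMinimalOn (G : Set (X ≃ₜ X)) Set.univ ↔
      ∃ 𝒲 : Set (Set X), (∀ W ∈ 𝒲, IsClopen W) ∧ 𝒲.PairwiseDisjoint id ∧
        ⋃₀ 𝒲 = Set.univ ∧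
        ∀ W ∈ 𝒲, (∀ g ∈ G, ⇑g '' W = W) ∧ MinimalOn (G : Set (X ≃ₜ X)) W := by
  constructor
  · intro H
    refine ⟨range fun x => closure (orbitSet G x), ?_, H.pairwiseDisjoint_range_closure_orbitSet,
      ?_, ?_⟩
    · rintro _ ⟨x, rfl⟩
      exact ⟨isClosed_closure, H.isOpen_closure_orbitSet x⟩
    · exact eq_univ_of_forall fun x =>
        ⟨_, mem_range_self x, subset_closure (mem_orbitSet_self G x)⟩
    · rintro _ ⟨x, rfl⟩
      exact ⟨fun g hg => image_closure_orbitSet hg x, H.minimalOn_closure_orbitSet x⟩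
  · rintro ⟨𝒲, hclopen, -, hcover, hmin⟩
    exact locallyMinimalOn_univ_of_sUnion_eq
      (fun W hW => ⟨(hclopen W hW).isOpen, (hmin W hW).2⟩) hcover
end

section
/- Let X be a first-countable topological space and G a group of homeomorphisms of X acting minimally, such that for every open U ⊆ X the action of the rigid stabiliser rist_G(U) on U is locally minimal. Fix x ∈ X, an open neighbourhood U of x, an open neighbourhood W ⊆ U of x on which rist_G(U) acts minimally, and an open neighbourhood V ⊆ U of x. Then for every y ∈ W there exists a sequence {g_i} in rist_G(U) such that g_i(x) → y and ⋂_{i=0}^∞ g_i(V) is open and contains y. -/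
open Filter Topology Set

variable {X : Type*} [TopologicalSpace X]

lemma rist_inv_mem {G : Subgroup (X ≃ₜ X)} {U : Set X} {g : X ≃ₜ X}
    (hg : g ∈ rist G U) : g⁻¹ ∈ rist G U := by
  refine ⟨G.inv_mem hg.1, fun z hz => ?_⟩
  show g.symm z = z
  conv_lhs => rw [← hg.2 z hz]
  exact g.symm_apply_apply z

lemma rist_mul_mem {G : Subgroup (X ≃ₜ X)} {U : Set X} {g h : X ≃ₜ X}
    (hg : g ∈ rist G U) (hh : h ∈ rist G U) : g * h ∈ rist G U := by
  refine ⟨G.mul_mem hg.1 hh.1, fun z hz => ?_⟩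
  show g (h z) = z
  rw [hh.2 z hz, hg.2 z hz]

lemma rist_mono {G : Subgroup (X ≃ₜ X)} {V U : Set X} (hVU : V ⊆ U) :
    rist G V ⊆ rist G U :=
  fun g hg => ⟨hg.1, fun z hz => hg.2 z (fun hzV => hz (hVU hzV))⟩

lemma rist_image_eq {G : Subgroup (X ≃ₜ X)} {V : Set X} {g : X ≃ₜ X}
    (hg : g ∈ rist G V) : ⇑g '' V = V := by
  have key : ∀ h : X ≃ₜ X, h ∈ rist G V → ∀ v ∈ V, h v ∈ V := by
    intro h hh v hv
    by_contra hnot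
    have h1 : h (h v) = h v := hh.2 (h v) hnot
    have h2 : h v = v := h.injective h1
    rw [h2] at hnot; exact hnot hv
  ext z
  constructor
  · rintro ⟨v, hv, rfl⟩
    exact key g hg v hv
  · intro hz
    refine ⟨g.symm z, ?_, g.apply_symm_apply z⟩
    have hsymm : g⁻¹ ∈ rist G V := rist_inv_mem hg
    exact key g⁻¹ hsymm z hz

theorem exists_sequence_with_open_intersection [FirstCountableTopology X]
    (G : Subgroup (X ≃ₜ X)) (hmin : IsMinimalAction G)
    (hrist : ∀ U : Set X, IsOpen U → LocallyMinimalOn (rist G U) U)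
    (x : X) (U : Set X) (hU : IsOpen U) (hxU : x ∈ U)
    (W : Set X) (hWU : W ⊆ U) (hW : IsOpen W) (hxW : x ∈ W)
    (hWmin : MinimalOn (rist G U) W)
    (V : Set X) (hVU : V ⊆ U) (hV : IsOpen V) (hxV : x ∈ V) :
    ∀ y ∈ W, ∃ g : ℕ → X ≃ₜ X, (∀ i, g i ∈ rist G U) ∧
      Tendsto (fun i => g i x) atTop (𝓝 y) ∧
      IsOpen (⋂ i, ⇑(g i) '' V) ∧ y ∈ ⋂ i, ⇑(g i) '' V := by
  intro y hyW
  -- a minimal patch `Z ∋ x` for `rist G V`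
  obtain ⟨Z, hZV, hZopen, hxZ, hZmin⟩ := hrist V hV x hxV
  -- find `k ∈ rist G U` with `k y ∈ Z` using minimality on `W` (note `x ∈ Z ∩ W`)
  have hxcl : x ∈ closure ({z | ∃ g ∈ rist G U, g y = z} ∩ W) := hWmin y hyW hxW
  obtain ⟨p, hp1, hp2⟩ :=
    mem_closure_iff.mp hxcl (Z ∩ W) (hZopen.inter hW) ⟨hxZ, hxW⟩
  obtain ⟨⟨hpZ, _⟩, ⟨k, hkU, hky⟩, _⟩ := And.intro hp1 hp2
  -- `p = k y ∈ Z`, and `p` is in the closure of the `rist G V`-orbit of `x` within `Z`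
  have hpcl : p ∈ closure ({z | ∃ g ∈ rist G V, g x = z} ∩ Z) := hZmin x hxZ hpZ
  obtain ⟨u, hu, hulim⟩ := mem_closure_iff_seq_limit.mp hpcl
  choose m hm hmx using fun n => (hu n).1
  refine ⟨fun n => k⁻¹ * m n, fun n => rist_mul_mem (rist_inv_mem hkU)
    (rist_mono hVU (hm n)), ?_, ?_, ?_⟩
  · -- convergence
    have hcomp : Tendsto (fun n => k.symm (u n)) atTop (𝓝 (k.symm p)) :=
      (k.symm.continuous.tendsto p).comp hulim
    have hsy : k.symm p = y := by rw [← hky]; exact k.symm_apply_apply y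
    rw [hsy] at hcomp
    convert hcomp using 2 with n
    show k.symm (m n x) = k.symm (u n)
    rw [hmx n]
  · -- openness of the intersection
    have himg : ∀ n, ⇑(k⁻¹ * m n) '' V = ⇑k.symm '' V := by
      intro n
      have : ⇑(k⁻¹ * m n) = ⇑k.symm ∘ ⇑(m n) := rfl
      rw [this, Set.image_comp, rist_image_eq (hm n)]
    rw [show (⋂ n, ⇑(k⁻¹ * m n) '' V) = ⋂ _ : ℕ, ⇑k.symm '' V from
      iInter_congr himg, iInter_const]
    exact k.symm.isOpen_image.mpr hV
  · -- membership
    refine mem_iInter.mpr fun n => ?_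
    have : ⇑(k⁻¹ * m n) = ⇑k.symm ∘ ⇑(m n) := rfl
    rw [this, Set.image_comp, rist_image_eq (hm n)]
    refine ⟨p, hZV hpZ, ?_⟩
    rw [← hky]; exact k.symm_apply_apply y
end

section
/- Let X be a first-countable Hausdorff space and G a group of homeomorphisms of X acting minimally, such that for every open U ⊆ X the action of rist_G(U) on U is locally minimal. If x, y ∈ X are both regular points (i.e. St_G(x) = St⁰_G(x) and St_G(y) = St⁰_G(y)), then St_G(x) ≅ St_G(y). -/
open Filter Topology Set

variable {X : Type*} [TopologicalSpace X]

/-!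
Back and forth. Using local minimality of rigid stabilisers and first countability, one builds
`h n ∈ G` and sets `A n` shrinking to `y` whose pullbacks `(h n)⁻¹ (A n)` shrink to `x`, such that
the later corrections `h m (h n)⁻¹` are supported in `A n`. If `g` fixes a neighbourhood of `x`,
then `h n g (h n)⁻¹` eventually fixes `A n` pointwise, so it commutes with all later corrections:
conjugation by `h n` is eventually constant on `St⁰_G(x)` with values in `St_G(y)`, and
symmetrically on `St⁰_G(y)`. For regular points these eventual conjugations are mutually inverse
isomorphisms `St_G(x) ≅ St_G(y)`.
-/

theorem Subgroup.nonempty_mulEquiv_of_eventually_conj {M ι : Type*} [Group M]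
    {H K : Subgroup M} {l : Filter ι} [l.NeBot] (h : ι → M)
    (hH : ∀ g ∈ H, ∃ k ∈ K, ∀ᶠ i in l, h i * g * (h i)⁻¹ = k)
    (hK : ∀ k ∈ K, ∃ g ∈ H, ∀ᶠ i in l, h i * g * (h i)⁻¹ = k) :
    Nonempty (H ≃* K) := by
  choose! φ hφK hφ using hH
  let f : H →ₙ* K :=
    { toFun := fun g => ⟨φ g, hφK g g.2⟩
      map_mul' := fun a b => Subtype.ext <| by
        obtain ⟨i, hab, ha, hb⟩ :=
          ((hφ _ (a * b).2).and ((hφ _ a.2).and (hφ _ b.2))).exists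
        show φ ↑(a * b) = φ a * φ b
        rw [← hab, ← ha, ← hb, Subgroup.coe_mul]
        group }
  refine ⟨MulEquiv.ofBijective f ⟨fun a b hab => Subtype.ext ?_, fun k => ?_⟩⟩
  · obtain ⟨i, ha, hb⟩ := ((hφ _ a.2).and (hφ _ b.2)).exists
    exact (MulAut.conj (h i)).injective (ha.trans ((congrArg Subtype.val hab).trans hb.symm))
  · obtain ⟨g, hgH, hg⟩ := hK k k.2
    obtain ⟨i, hi, hi'⟩ := ((hφ g hgH).and hg).exists
    exact ⟨⟨g, hgH⟩, Subtype.ext (hi.symm.trans hi')⟩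

namespace Homeomorph

theorem apply_mem_iff_of_forall_notMem {c : X ≃ₜ X} {B : Set X} (hc : ∀ z ∉ B, c z = z)
    {z : X} : c z ∈ B ↔ z ∈ B := by
  refine ⟨fun hcz => by_contra fun hz => hz (hc z hz ▸ hcz), fun hz => by_contra fun hcz => ?_⟩
  rw [c.injective (hc _ hcz)] at hcz
  exact hcz hz

theorem commute_of_forall_notMem_of_forall_mem {c k : X ≃ₜ X} {B : Set X}
    (hc : ∀ z ∉ B, c z = z) (hk : ∀ z ∈ B, k z = z) : Commute c k := by
  ext z
  show c (k z) = k (c z)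
  by_cases hz : z ∈ B
  · rw [hk z hz, hk _ ((apply_mem_iff_of_forall_notMem hc).2 hz)]
  · have hkz : k z ∉ B := fun h => hz (k.injective (hk _ h) ▸ h)
    rw [hc z hz, hc _ hkz]

end Homeomorph

section BackAndForth

variable {G : Subgroup (X ≃ₜ X)}

theorem inv_mul_mul_mem_rist {A : Set X} {c g : X ≃ₜ X} (hc : c ∈ G) (hg : g ∈ rist G A) :
    c⁻¹ * g * c ∈ rist G (c ⁻¹' A) := by
  refine ⟨G.mul_mem (G.mul_mem (G.inv_mem hc) hg.1) hc, fun z hz => ?_⟩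
  show c.symm (g (c z)) = z
  rw [hg.2 _ hz, c.symm_apply_apply]

theorem MinimalOn.preimage {A W : Set X} {c : X ≃ₜ X} (hc : c ∈ G)
    (h : MinimalOn (rist G A) W) : MinimalOn (rist G (c ⁻¹' A)) (c ⁻¹' W) := by
  intro w hw v hv
  have hsub : c ⁻¹' ({z | ∃ g ∈ rist G A, g (c w) = z} ∩ W) ⊆
      {z | ∃ g ∈ rist G (c ⁻¹' A), g w = z} ∩ c ⁻¹' W := by
    rintro z ⟨⟨g, hg, hgz⟩, hzW⟩
    refine ⟨⟨c⁻¹ * g * c, inv_mul_mul_mem_rist hc hg, ?_⟩, hzW⟩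
    show c.symm (g (c w)) = z
    rw [hgz, c.symm_apply_apply]
  exact closure_mono hsub (c.preimage_closure _ ▸ h (c w) hw hv)

theorem MinimalOn.exists_apply_mem {S : Set (X ≃ₜ X)} {W O : Set X} (h : MinimalOn S W)
    {w z : X} (hw : w ∈ W) (hO : IsOpen O) (hzO : z ∈ O) (hzW : z ∈ W) :
    ∃ g ∈ S, g w ∈ O := by
  obtain ⟨-, hO, ⟨g, hg, rfl⟩, -⟩ := mem_closure_iff.1 (h w hw hzW) O hO hzO
  exact ⟨g, hg, hO⟩

theorem IsMinimalAction.minimalOn_univ (hmin : IsMinimalAction G) :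
    MinimalOn (rist G univ) (univ : Set X) := by
  intro w _ v _
  refine closure_mono (fun z hz => ?_) (hmin w v)
  obtain ⟨g, hg, hgz⟩ := hz
  exact ⟨⟨g, ⟨hg, fun a ha => absurd (mem_univ a) ha⟩, hgz⟩, mem_univ z⟩

/-- `rist G A` already acts minimally on the window `S ∋ y, h x`, while the next correction of `h`
only has to be supported in the larger set `A`. -/
structure BackAndForthStage (G : Subgroup (X ≃ₜ X)) (x y : X) where
  h : X ≃ₜ X
  A : Set X
  S : Set X
  mem : h ∈ G
  isOpen_S : IsOpen S
  S_subset_A : S ⊆ A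
  mem_S : y ∈ S
  apply_mem_S : h x ∈ S
  minimalOn : MinimalOn (rist G A) S

def BackAndForthStage.initial (hmin : IsMinimalAction G) (x y : X) : BackAndForthStage G x y :=
  ⟨1, univ, univ, G.one_mem, isOpen_univ, subset_rfl, mem_univ y, mem_univ _,
    hmin.minimalOn_univ⟩

theorem BackAndForthStage.exists_next
    (hrist : ∀ U : Set X, IsOpen U → LocallyMinimalOn (rist G U) U) {x y : X}
    (s : BackAndForthStage G x y) {B C : Set X} (hB : IsOpen B) (hyB : y ∈ B) (hC : IsOpen C)
    (hxC : x ∈ C) :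
    ∃ s' : BackAndForthStage G x y, s'.A ⊆ s.A ∩ B ∧ s'.h ⁻¹' s'.A ⊆ C ∧
      ∀ z ∉ s.A, (s'.h * s.h⁻¹) z = z := by
  obtain ⟨h, A, S, hG, hS, hSA, hyS, hxS, hmin⟩ := s
  -- `r ∈ rist G A` moves `h x` into a window `W ∋ y`; then `t ∈ rist G (S ∩ B)` moves `y` into a
  -- window `W₀ ∋ r (h x)` pulling back into `C`, and everything is transported back by `t`.
  obtain ⟨W, hWS, hW, hyW, hminW⟩ := hrist (S ∩ B) (hS.inter hB) y ⟨hyS, hyB⟩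
  obtain ⟨r, hr, hrW⟩ := hmin.exists_apply_mem hxS hW hyW (hWS hyW).1
  set Ω : Set X := ⇑((r * h)⁻¹) ⁻¹' C ∩ W
  have hΩ : IsOpen Ω := (hC.preimage (r * h)⁻¹.continuous).inter hW
  have hxΩ : r (h x) ∈ Ω := ⟨by simpa using hxC, hrW⟩
  obtain ⟨W₀, hW₀Ω, hW₀, hxW₀, hminW₀⟩ := hrist Ω hΩ _ hxΩ
  obtain ⟨t, ht, htW₀⟩ := hminW.exists_apply_mem hyW hW₀ hxW₀ (hW₀Ω hxW₀).2
  refine ⟨⟨t⁻¹ * (r * h), t ⁻¹' Ω, t ⁻¹' W₀, G.mul_mem (G.inv_mem ht.1) (G.mul_mem hr.1 hG),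
    hW₀.preimage t.continuous, preimage_mono hW₀Ω, htW₀, by simpa using hxW₀,
    hminW₀.preimage ht.1⟩, ?_, ?_, ?_⟩
  · intro z hz
    have hzSB := (Homeomorph.apply_mem_iff_of_forall_notMem ht.2).1 (hWS hz.2)
    exact ⟨hSA hzSB.1, hzSB.2⟩
  · intro z hz
    simpa using hz.1
  · intro z hz
    have htz : t z = z := ht.2 z fun h => hz (hSA h.1)
    simpa [hr.2 z hz] using t.symm_apply_eq.2 htz.symm

structure BackAndForth (G : Subgroup (X ≃ₜ X)) (x y : X) where
  h : ℕ → X ≃ₜ X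
  A : ℕ → Set X
  mem : ∀ n, h n ∈ G
  mem_A : ∀ n, y ∈ A n
  apply_mem_A : ∀ n, h n x ∈ A n
  tendsto_A : Tendsto A atTop (𝓝 y).smallSets
  tendsto_preimage_A : Tendsto (fun n => h n ⁻¹' A n) atTop (𝓝 x).smallSets
  mul_inv_apply_of_notMem : ∀ {n m}, n ≤ m → ∀ z ∉ A n, (h m * (h n)⁻¹) z = z

end BackAndForth

namespace BackAndForth

variable {G : Subgroup (X ≃ₜ X)}

theorem nonempty [FirstCountableTopology X] (hmin : IsMinimalAction G)
    (hrist : ∀ U : Set X, IsOpen U → LocallyMinimalOn (rist G U) U) (x y : X) :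
    Nonempty (BackAndForth G x y) := by
  obtain ⟨u, hu, hux⟩ := (nhds_basis_opens x).exists_antitone_subbasis
  obtain ⟨v, hv, hvy⟩ := (nhds_basis_opens y).exists_antitone_subbasis
  choose next hnext_A hnext_preimage hnext_apply using fun n (s : BackAndForthStage G x y) =>
    s.exists_next hrist (hv n).2 (hv n).1 (hu n).2 (hu n).1
  let s : ℕ → BackAndForthStage G x y :=
    fun n => Nat.rec (BackAndForthStage.initial hmin x y) next n
  have hanti : Antitone fun n => (s n).A :=
    antitone_nat_of_succ_le fun n => (hnext_A n (s n)).trans inter_subset_left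
  refine ⟨⟨fun n => (s n).h, fun n => (s n).A, fun n => (s n).mem,
    fun n => (s n).S_subset_A (s n).mem_S, fun n => (s n).S_subset_A (s n).apply_mem_S,
    ?_, ?_, ?_⟩⟩
  · rw [← tendsto_add_atTop_iff_nat 1]
    exact hvy.tendsto_smallSets.smallSets_mono
      (Eventually.of_forall fun n => (hnext_A n (s n)).trans inter_subset_right)
  · rw [← tendsto_add_atTop_iff_nat 1]
    exact hux.tendsto_smallSets.smallSets_mono
      (Eventually.of_forall fun n => hnext_preimage n (s n))
  · intro n m hnm
    induction m, hnm using Nat.le_induction with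
    | base => simp
    | succ m hnm ih =>
      intro z hz
      rw [show (s (m + 1)).h * (s n).h⁻¹ = ((s (m + 1)).h * (s m).h⁻¹) * ((s m).h * (s n).h⁻¹)
        by group, Homeomorph.mul_apply, ih z hz]
      exact hnext_apply m (s m) z fun h => hz (hanti hnm h)

variable {x y : X} (b : BackAndForth G x y)

theorem eventually_conj_eq {N : ℕ} {k : X ≃ₜ X} (hk : ∀ z ∈ b.A N, k z = z) :
    ∀ᶠ n in atTop, b.h n * ((b.h N)⁻¹ * k * b.h N) * (b.h n)⁻¹ = k := by
  filter_upwards [eventually_ge_atTop N] with n hn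
  calc b.h n * ((b.h N)⁻¹ * k * b.h N) * (b.h n)⁻¹
      = (b.h n * (b.h N)⁻¹) * k * (b.h n * (b.h N)⁻¹)⁻¹ := by group
    _ = k := (Homeomorph.commute_of_forall_notMem_of_forall_mem
        (b.mul_inv_apply_of_notMem hn) hk).mul_inv_cancel

theorem exists_eventually_conj_eq_of_mem_nbhdStab_left {g : X ≃ₜ X} (hg : g ∈ nbhdStab G x) :
    ∃ k ∈ stabSub G y, ∀ᶠ n in atTop, b.h n * g * (b.h n)⁻¹ = k := by
  obtain ⟨hgG, V, hV, hxV, hgV⟩ := hg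
  obtain ⟨N, hN⟩ := (b.tendsto_preimage_A.eventually
    (eventually_smallSets_subset.2 (hV.mem_nhds hxV))).exists
  set k := b.h N * g * (b.h N)⁻¹
  have hk : ∀ z ∈ b.A N, k z = z := fun z hz => by
    have hzV : (b.h N).symm z ∈ V := hN (by simpa using hz)
    simp [k, hgV _ hzV]
  have hgk : g = (b.h N)⁻¹ * k * b.h N := by simp only [k]; group
  refine ⟨k, ⟨G.mul_mem (G.mul_mem (b.mem N) hgG) (G.inv_mem (b.mem N)), hk y (b.mem_A N)⟩, ?_⟩
  exact hgk ▸ b.eventually_conj_eq hk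

theorem exists_eventually_conj_eq_of_mem_nbhdStab_right {k : X ≃ₜ X} (hk : k ∈ nbhdStab G y) :
    ∃ g ∈ stabSub G x, ∀ᶠ n in atTop, b.h n * g * (b.h n)⁻¹ = k := by
  obtain ⟨hkG, V, hV, hyV, hkV⟩ := hk
  obtain ⟨N, hN⟩ := (b.tendsto_A.eventually
    (eventually_smallSets_subset.2 (hV.mem_nhds hyV))).exists
  refine ⟨(b.h N)⁻¹ * k * b.h N, ⟨G.mul_mem (G.mul_mem (G.inv_mem (b.mem N)) hkG) (b.mem N), ?_⟩,
    b.eventually_conj_eq fun z hz => hkV z (hN hz)⟩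
  simp [hkV _ (hN (b.apply_mem_A N))]

end BackAndForth

theorem stab_iso_of_regular_general [FirstCountableTopology X]
    (G : Subgroup (X ≃ₜ X)) (hmin : IsMinimalAction G)
    (hrist : ∀ U : Set X, IsOpen U → LocallyMinimalOn (rist G U) U)
    (x y : X) (hx : stabSub G x = nbhdStabSub G x) (hy : stabSub G y = nbhdStabSub G y) :
    Nonempty (↥(stabSub G x) ≃* ↥(stabSub G y)) := by
  obtain ⟨b⟩ := BackAndForth.nonempty hmin hrist x y
  refine Subgroup.nonempty_mulEquiv_of_eventually_conj (l := atTop) b.h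
    (fun g hg => ?_) (fun k hk => ?_)
  · exact b.exists_eventually_conj_eq_of_mem_nbhdStab_left (hx ▸ hg : g ∈ nbhdStabSub G x)
  · exact b.exists_eventually_conj_eq_of_mem_nbhdStab_right (hy ▸ hk : k ∈ nbhdStabSub G y)

theorem stab_iso_of_regular [FirstCountableTopology X] [T2Space X]
    (G : Subgroup (X ≃ₜ X)) (hmin : IsMinimalAction G)
    (hrist : ∀ U : Set X, IsOpen U → LocallyMinimalOn (rist G U) U)
    (x y : X) (hx : stabSub G x = nbhdStabSub G x) (hy : stabSub G y = nbhdStabSub G y) :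
    Nonempty (↥(stabSub G x) ≃* ↥(stabSub G y)) :=
  stab_iso_of_regular_general G hmin hrist x y hx hy
end

section
/- Let G be a group of homeomorphisms of the Cantor space X whose action is minimal, and let [G] be the topological full group of G. Then for every open set U ⊆ X, the action of rist_{[G]}(U) on U is minimal. -/
open Filter Topology Set

variable {X : Type*} [TopologicalSpace X]

/-- The topological full group of `G`: homeomorphisms locally agreeing with elements of `G`. -/
def fullGroup (G : Subgroup (X ≃ₜ X)) : Set (X ≃ₜ X) :=
  {h | ∀ x : X, ∃ U : Set X, IsOpen U ∧ x ∈ U ∧ ∃ g ∈ G, ∀ z ∈ U, h z = g z}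

section SwapAux

variable (g : X ≃ₜ X) (A : Set X)

open scoped Classical in
/-- The partial-swap map: `g` on `A`, `g⁻¹` on `g '' A`, identity elsewhere. -/
noncomputable def swapFun : X → X := fun z => if z ∈ A then g z else if z ∈ g '' A then g.symm z else z

lemma swapFun_invol (hd : Disjoint A (g '' A)) : ∀ z, swapFun g A (swapFun g A z) = z := by
  intro z
  unfold swapFun
  by_cases hzA : z ∈ A
  · have h1 : g z ∈ g '' A := ⟨z, hzA, rfl⟩
    have h2 : g z ∉ A := fun h => hd.ne_of_mem h h1 rfl
    simp [hzA, h1, h2]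
  · by_cases hzB : z ∈ g '' A
    · obtain ⟨a, haA, rfl⟩ := hzB
      have hmem : g a ∈ g '' A := ⟨a, haA, rfl⟩
      have : g.symm (g a) = a := g.symm_apply_apply a
      simp [hzA, hmem, this, haA]
    · simp [hzA, hzB]

lemma swapFun_cont (hA : IsClopen A) (hd : Disjoint A (g '' A)) :
    Continuous (swapFun g A) := by
  have hB : IsClopen (g '' A) := ⟨g.isClosedMap A hA.1, g.isOpenMap A hA.2⟩
  rw [continuous_iff_continuousAt]
  intro z
  by_cases hzA : z ∈ A
  · refine g.continuous.continuousAt.congr ?_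
    filter_upwards [hA.2.mem_nhds hzA] with w hw
    simp [swapFun, hw]
  · by_cases hzB : z ∈ g '' A
    · refine g.symm.continuous.continuousAt.congr ?_
      filter_upwards [hB.2.mem_nhds hzB] with w hw
      have hwA : w ∉ A := fun h => hd.ne_of_mem h hw rfl
      simp [swapFun, hw, hwA]
    · refine continuous_id.continuousAt.congr ?_
      have hopen : IsOpen (A ∪ g '' A)ᶜ := (hA.1.union hB.1).isOpen_compl
      filter_upwards [hopen.mem_nhds (by simp [hzA, hzB])] with w hw
      simp only [mem_compl_iff, mem_union, not_or] at hw
      simp [swapFun, hw.1, hw.2]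

/-- The partial-swap homeomorphism. -/
noncomputable def swapHomeo (hA : IsClopen A) (hd : Disjoint A (g '' A)) : X ≃ₜ X where
  toFun := swapFun g A
  invFun := swapFun g A
  left_inv := swapFun_invol g A hd
  right_inv := swapFun_invol g A hd
  continuous_toFun := swapFun_cont g A hA hd
  continuous_invFun := swapFun_cont g A hA hd

end SwapAux

theorem fullGroup_rist_minimal [CompactSpace X] [TopologicalSpace.MetrizableSpace X]
    [TotallyDisconnectedSpace X] [PerfectSpace X] [Nonempty X]
    (G : Subgroup (X ≃ₜ X)) (hmin : IsMinimalAction G) :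
    ∀ U : Set X, IsOpen U →
      MinimalOn {h | h ∈ fullGroup G ∧ ∀ z ∉ U, h z = z} U := by
  haveI : T2Space X := TopologicalSpace.t2Space_of_metrizableSpace
  intro U hU y hyU x hxU
  rw [mem_closure_iff]
  intro N hN hxN
  have hV : IsOpen (N ∩ U) := hN.inter hU
  obtain ⟨w, ⟨hwN, hwU⟩, g, hgG, hgy⟩ :=
    (hmin y).inter_open_nonempty (N ∩ U) hV ⟨x, hxN, hxU⟩
  subst hgy
  by_cases hfix : g y = y
  · refine ⟨y, by rwa [← hfix], ⟨1, ⟨?_, fun z _ => rfl⟩, rfl⟩, by rwa [← hfix]⟩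
    intro p
    exact ⟨univ, isOpen_univ, trivial, 1, G.one_mem, fun z _ => rfl⟩
  · obtain ⟨O₁, O₂, hO₁, hO₂, hyO₁, hgyO₂, hdisj⟩ := t2_separation (Ne.symm hfix)
    have hW : IsOpen (U ∩ g ⁻¹' (N ∩ U) ∩ O₁ ∩ g ⁻¹' O₂) :=
      (((hU.inter (hV.preimage g.continuous)).inter hO₁).inter (hO₂.preimage g.continuous))
    have hyW : y ∈ U ∩ g ⁻¹' (N ∩ U) ∩ O₁ ∩ g ⁻¹' O₂ :=
      ⟨⟨⟨hyU, hwN, hwU⟩, hyO₁⟩, hgyO₂⟩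
    obtain ⟨A, hA, hyA, hAW⟩ := compact_exists_isClopen_in_isOpen hW hyW
    have hAU : A ⊆ U := fun z hz => (hAW hz).1.1.1
    have hANU : g '' A ⊆ N ∩ U := by
      rintro _ ⟨a, haA, rfl⟩; exact (hAW haA).1.1.2
    have hdA : Disjoint A (g '' A) := by
      refine Set.disjoint_left.mpr ?_
      rintro z hzA ⟨a, haA, rfl⟩
      exact hdisj.ne_of_mem (hAW hzA).1.2 (hAW haA).2 rfl
    set h := swapHomeo g A hA hdA with hh
    have hB : IsClopen (g '' A) := ⟨g.isClosedMap A hA.1, g.isOpenMap A hA.2⟩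
    have hhA : ∀ z ∈ A, h z = g z := fun z hz => by
      simp [hh, swapHomeo, swapFun, hz]
    have hhB : ∀ z ∈ g '' A, h z = g.symm z := fun z hz => by
      have hzA : z ∉ A := fun hc => hdA.ne_of_mem hc hz rfl
      simp [hh, swapHomeo, swapFun, hz, hzA]
    have hhid : ∀ z, z ∉ A → z ∉ g '' A → h z = z := fun z h1 h2 => by
      simp [hh, swapHomeo, swapFun, h1, h2]
    have hhfull : h ∈ fullGroup G := by
      intro p
      by_cases hpA : p ∈ A
      · exact ⟨A, hA.2, hpA, g, hgG, hhA⟩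
      · by_cases hpB : p ∈ g '' A
        · exact ⟨g '' A, hB.2, hpB, g⁻¹, G.inv_mem hgG, hhB⟩
        · exact ⟨(A ∪ g '' A)ᶜ, (hA.1.union hB.1).isOpen_compl,
            by simp [hpA, hpB], 1, G.one_mem, fun z hz => by
              simp only [mem_compl_iff, mem_union, not_or] at hz
              exact hhid z hz.1 hz.2⟩
    refine ⟨g y, hwN, ⟨h, ⟨hhfull, fun z hz => ?_⟩, ?_⟩, hwU⟩
    · exact hhid z (fun hc => hz (hAU hc)) (fun hc => hz (hANU hc).2)
    · exact hhA y hyA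
end

section
/- Let G be a group of homeomorphisms of the Cantor space X with minimal action and [G] its topological full group. If x ∈ X is a regular point for the action of G on X, then x is also a regular point for the action of [G] on X. -/
open Filter Topology Set

variable {X : Type*} [TopologicalSpace X]

theorem regular_for_fullGroup [CompactSpace X] [TopologicalSpace.MetrizableSpace X]
    [TotallyDisconnectedSpace X] [PerfectSpace X] [Nonempty X]
    (G : Subgroup (X ≃ₜ X)) (hmin : IsMinimalAction G) (x : X)
    (hreg : ∀ g : X ≃ₜ X, g ∈ G → g x = x →
      ∃ U : Set X, IsOpen U ∧ x ∈ U ∧ ∀ z ∈ U, g z = z) :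
    ∀ h : X ≃ₜ X, h ∈ fullGroup G → h x = x →
      ∃ U : Set X, IsOpen U ∧ x ∈ U ∧ ∀ z ∈ U, h z = z := by
  intro h hfull hx
  obtain ⟨U, hU, hxU, g, hgG, hg⟩ := hfull x
  have hgx : g x = x := by rw [← hg x hxU, hx]
  obtain ⟨V, hV, hxV, hgV⟩ := hreg g hgG hgx
  exact ⟨U ∩ V, hU.inter hV, ⟨hxU, hxV⟩, fun z hz => by rw [hg z hz.1, hgV z hz.2]⟩
end

section
/- Let X be a first-countable Hausdorff space and suppose g_i is a sequence of homeomorphisms of X converging pointwise to a bijection f such that: for every z ≠ x there is N with f agreeing with g_N on a neighbourhood of z avoiding a basis element U_N, and f maps each basis neighbourhood U_N of x onto an open neighbourhood V_N of y = f(x). Then f is an open map, and hence (applying the same to f⁻¹) a homeomorphism. -/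
open Filter Topology Set

variable {X : Type*} [TopologicalSpace X]

/-! Openness of `f` is local: `𝓝 (f w) ≤ map f (𝓝 w)` at every `w`. At `x` this holds because
`f` maps the basis `U N` onto the open neighbourhoods `V N` of `f x`; at `w ≠ x` it holds because
`f` agrees with the homeomorphism `g N` near `w` as soon as `U N` is separated from `w`. -/

section

variable {α β ι : Type*} [TopologicalSpace α]

theorem nhds_le_map_of_forall_image_mem_nhds [TopologicalSpace β] {f : α → β} {a : α}
    {U : ι → Set α} (hU : ∀ S ∈ 𝓝 a, ∃ i, U i ⊆ S) (himg : ∀ i, f '' U i ∈ 𝓝 (f a)) :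
    𝓝 (f a) ≤ map f (𝓝 a) :=
  le_map fun S hS =>
    let ⟨i, hi⟩ := hU S hS
    mem_of_superset (himg i) (image_mono hi)

theorem nhds_le_map_of_eventuallyEq [TopologicalSpace β] {f h : α → β} {a : α}
    (hh : IsOpenMap h) (hfh : f =ᶠ[𝓝 a] h) : 𝓝 (f a) ≤ map f (𝓝 a) := by
  rw [map_congr hfh, hfh.eq_of_nhds]
  exact hh.nhds_le a

theorem exists_eventuallyEq_of_eq_off_basis [T2Space α] {f : α → β} {g : ι → α → β}
    {x w : α} {U : ι → Set α} (hU : ∀ S ∈ 𝓝 x, ∃ i, U i ⊆ S)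
    (hagree : ∀ i, ∀ z ∉ U i, f z = g i z) (hw : w ≠ x) : ∃ i, f =ᶠ[𝓝 w] g i := by
  obtain ⟨A, B, hA, hB, hAB⟩ := t2_separation_nhds hw.symm
  obtain ⟨i, hi⟩ := hU A hA
  exact ⟨i, mem_of_superset hB fun z hzB => hagree i z fun hzU => hAB.ne_of_mem (hi hzU) hzB rfl⟩

end

theorem pointwise_limit_isOpenMap_general [T2Space X]
    (x y : X) (U V : ℕ → Set X) (g : ℕ → X ≃ₜ X) (f : X → X)
    (hfx : f x = y)
    (hUbasis : ∀ S ∈ 𝓝 x, ∃ i, U i ⊆ S)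
    (hVopen : ∀ i, IsOpen (V i)) (hyV : ∀ i, y ∈ V i)
    (hagree : ∀ N, ∀ z ∉ U N, f z = g N z)
    (himg : ∀ N, f '' U N = V N) :
    IsOpenMap f := by
  refine isOpenMap_iff_nhds_le.2 fun w => ?_
  rcases eq_or_ne w x with rfl | hwx
  · refine nhds_le_map_of_forall_image_mem_nhds hUbasis fun i => ?_
    rw [himg i, hfx]
    exact (hVopen i).mem_nhds (hyV i)
  · obtain ⟨N, hN⟩ := exists_eventuallyEq_of_eq_off_basis hUbasis hagree hwx
    exact nhds_le_map_of_eventuallyEq (g N).isOpenMap hN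

theorem pointwise_limit_isOpenMap [FirstCountableTopology X] [T2Space X]
    (x y : X) (U V : ℕ → Set X) (g : ℕ → X ≃ₜ X) (f : X → X)
    (hbij : Function.Bijective f) (hfx : f x = y)
    (hUopen : ∀ i, IsOpen (U i)) (hxU : ∀ i, x ∈ U i)
    (hUdec : ∀ i, U (i + 1) ⊆ U i) (hUbasis : ∀ S ∈ 𝓝 x, ∃ i, U i ⊆ S)
    (hVopen : ∀ i, IsOpen (V i)) (hyV : ∀ i, y ∈ V i)
    (hVdec : ∀ i, V (i + 1) ⊆ V i) (hVbasis : ∀ S ∈ 𝓝 y, ∃ i, V i ⊆ S)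
    (hconv : ∀ z : X, Tendsto (fun i => g i z) atTop (𝓝 (f z)))
    (hagree : ∀ N, ∀ z ∉ U N, f z = g N z)
    (himg : ∀ N, f '' U N = V N) :
    IsOpenMap f :=
  pointwise_limit_isOpenMap_general x y U V g f hfx hUbasis hVopen hyV hagree himg
end
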